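/- Let S be a cofibrantly generated model category, (C, D) a pair of small categories, X ∈ S^C and c an object of C. The following are equivalent: (i) X satisfies D-codescent at c; (ii) there exists a trivial D-fibration η : X′ → X with X′ D-cofibrant such that η(c) is a weak equivalence; (iii) for every trivial D-fibration η : X′ → X with X′ D-cofibrant, η(c) is a weak equivalence; (iv) there exists a (D ∪ {c})-weak equivalence η : X′ → X with X′ D-cofibrant; (v) for every D-weak equivalence η : X′ → X with X′ D-cofibrant, η(c) is a weak equivalence. -/

import Mathlib

/-! Preliminaries: basic notions of homotopical algebra (lifting properties,
model structures, transfinite compositions, relative cell complexes, smallness,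
cofibrant generation) and the relative model structure `U_S(C,D)` on functor
categories, following Balmer–Matthey, "Codescent theory I". -/

universe w v u u₂ u₃

open CategoryTheory Limits

namespace Codescent

set_option linter.dupNamespace false

section Lifting

variable {M : Type u} [Category.{v} M]

/-- The class of morphisms having the left lifting property with respect to all
morphisms in `K`. -/
def llp (K : MorphismProperty M) : MorphismProperty M :=
  fun _ _ f => ∀ ⦃X Y : M⦄ (g : X ⟶ Y), K g → HasLiftingProperty f g

/-- The class of morphisms having the right lifting property with respect to all
morphisms in `K`. -/
def rlp (K : MorphismProperty M) : MorphismProperty M :=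
  fun _ _ g => ∀ ⦃A B : M⦄ (f : A ⟶ B), K f → HasLiftingProperty f g

/-- Intersection of two classes of morphisms. -/
def inter (P Q : MorphismProperty M) : MorphismProperty M :=
  fun _ _ f => P f ∧ Q f

/-- `f` is a retract of `g` (as objects of the arrow category). -/
def RetractHom {X Y X' Y' : M} (f : X ⟶ Y) (g : X' ⟶ Y') : Prop :=
  ∃ (i : Arrow.mk f ⟶ Arrow.mk g) (r : Arrow.mk g ⟶ Arrow.mk f), i ≫ r = 𝟙 (Arrow.mk f)

/-- The object `c` is a retract of the object `d`. -/
def IsRetractObj (c d : M) : Prop :=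
  ∃ (i : c ⟶ d) (r : d ⟶ c), i ≫ r = 𝟙 c

/-- A functorial factorization of every morphism as a morphism in `L` followed by
a morphism in `R`. -/
structure FunctorialFact (L R : MorphismProperty M) where
  Z : Arrow M ⥤ M
  ι : (Arrow.leftFunc : Arrow M ⥤ M) ⟶ Z
  π : Z ⟶ (Arrow.rightFunc : Arrow M ⥤ M)
  fac : ∀ f : Arrow M, ι.app f ≫ π.app f = f.hom
  mem_left : ∀ f : Arrow M, L (ι.app f)
  mem_right : ∀ f : Arrow M, R (π.app f)

end Lifting

/-- A (Quillen) model structure on a category `M`: classes of weak equivalences,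
cofibrations and fibrations satisfying MC2–MC5 (MC1, completeness and
cocompleteness, is imposed separately as `HasLimits`/`HasColimits`). -/
structure ModelStructure (M : Type u) [Category.{v} M] where
  weq : MorphismProperty M
  cof : MorphismProperty M
  fib : MorphismProperty M
  /-- MC2, two-out-of-three -/
  weq_comp : ∀ {X Y Z : M} (f : X ⟶ Y) (g : Y ⟶ Z), weq f → weq g → weq (f ≫ g)
  weq_cancel_left : ∀ {X Y Z : M} (f : X ⟶ Y) (g : Y ⟶ Z), weq f → weq (f ≫ g) → weq g
  weq_cancel_right : ∀ {X Y Z : M} (f : X ⟶ Y) (g : Y ⟶ Z), weq g → weq (f ≫ g) → weq f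
  /-- MC3, closure under retracts -/
  weq_retract : ∀ {X Y X' Y' : M} (f : X ⟶ Y) (g : X' ⟶ Y'), RetractHom f g → weq g → weq f
  cof_retract : ∀ {X Y X' Y' : M} (f : X ⟶ Y) (g : X' ⟶ Y'), RetractHom f g → cof g → cof f
  fib_retract : ∀ {X Y X' Y' : M} (f : X ⟶ Y) (g : X' ⟶ Y'), RetractHom f g → fib g → fib f
  /-- MC4, lifting -/
  cof_lift : ∀ {A B X Y : M} (f : A ⟶ B) (g : X ⟶ Y),
    cof f → weq g → fib g → HasLiftingProperty f g
  fib_lift : ∀ {A B X Y : M} (f : A ⟶ B) (g : X ⟶ Y),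
    weq f → cof f → fib g → HasLiftingProperty f g
  /-- MC5, functorial factorizations -/
  fact₁ : FunctorialFact (M := M) cof (inter weq fib)
  fact₂ : FunctorialFact (M := M) (inter weq cof) fib

section Transfinite

/-- A well-ordered type (with bottom element and successors), the index for
transfinite compositions (a "λ-sequence" index). -/
structure WOType : Type (w + 1) where
  carrier : Type w
  [lin : LinearOrder carrier]
  [succ : SuccOrder carrier]
  [bot : OrderBot carrier]
  [wf : WellFoundedLT carrier]

attribute [instance] WOType.lin WOType.succ WOType.bot WOType.wf

variable {M : Type u} [Category.{v} M] {N : Type u₂} [Category.{v} N]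

/-- The class of pushouts of morphisms of `K`. -/
def pushoutsOf (K : MorphismProperty M) : MorphismProperty M :=
  fun X Y f => ∃ (A B : M) (g : A ⟶ B) (t : A ⟶ X) (b : B ⟶ Y), K g ∧ IsPushout g t b f

/-- The inclusion functor of `{i // i < j}` into a preorder `J`. -/
def iioIncl {J : Type w} [Preorder J] (j : J) : {i : J // i < j} ⥤ J where
  obj i := i.1
  map {i i'} h := homOfLE (Subtype.coe_le_coe.mpr (leOfHom h))

/-- The cocone on the restriction of `F : J ⥤ M` to `{i // i < j}` with apex `F.obj j`. -/
def iioCocone {J : Type w} [Preorder J] (F : J ⥤ M) (j : J) : Cocone (iioIncl j ⋙ F) where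
  pt := F.obj j
  ι :=
    { app := fun i => F.map (homOfLE i.2.le)
      naturality := fun i i' h => by
        dsimp
        rw [Category.comp_id, ← F.map_comp]
        rfl }

/-- `F : J ⥤ M` is a (continuous) transfinite sequence all of whose successor
maps lie in the class `P`. -/
structure IsChainOf (P : MorphismProperty M) {J : Type w} [LinearOrder J] [SuccOrder J]
    (F : J ⥤ M) : Prop where
  succ_mem : ∀ j : J, ¬ IsMax j → P (F.map (homOfLE (Order.le_succ j)))
  limit_isColimit : ∀ j : J, Order.IsSuccLimit j → Nonempty (IsColimit (iioCocone F j))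

/-- The class of relative `K`-cells: transfinite compositions of pushouts of
morphisms of `K`. -/
def cell (K : MorphismProperty M) : MorphismProperty M :=
  fun X Y f => ∃ (J : WOType.{v}) (F : J.carrier ⥤ M)
    (_ : IsChainOf (pushoutsOf K) F) (c : Cocone F) (_ : IsColimit c)
    (e : X ≅ F.obj ⊥) (e' : c.pt ≅ Y), f = e.hom ≫ c.ι.app ⊥ ≫ e'.hom

/-- A linear order is `κ`-filtered when it has no top element and every subset of
cardinality at most `κ` is bounded above. -/
def KFiltered (κ : Cardinal.{w}) (J : Type w) [LinearOrder J] : Prop :=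
  (∀ j : J, ∃ j' : J, j < j') ∧
    ∀ s : Set J, Cardinal.mk s ≤ κ → ∃ j : J, ∀ i ∈ s, i ≤ j

/-- The object `d` is small relative to the class `K`: for some cardinal `κ`,
morphisms from `d` into the colimit of any `κ`-filtered well-ordered continuous
sequence with successor maps in `K` factor, essentially uniquely, through some
stage of the sequence. -/
def IsSmallRel (d : M) (K : MorphismProperty M) : Prop :=
  ∃ κ : Cardinal.{v}, ∀ (J : WOType.{v}), KFiltered κ J.carrier →
    ∀ (F : J.carrier ⥤ M), IsChainOf K F →
    ∀ (c : Cocone F), IsColimit c →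
      (∀ g : d ⟶ c.pt, ∃ (j : J.carrier) (h : d ⟶ F.obj j), h ≫ c.ι.app j = g) ∧
      (∀ (j j' : J.carrier) (h : d ⟶ F.obj j) (h' : d ⟶ F.obj j'),
        h ≫ c.ι.app j = h' ≫ c.ι.app j' →
          ∃ (k : J.carrier) (l : j ≤ k) (l' : j' ≤ k),
            h ≫ F.map (homOfLE l) = h' ≫ F.map (homOfLE l'))

/-- The model structure `P` is cofibrantly generated, with set of generating
cofibrations `I` and set of generating trivial cofibrations `J`. -/
structure IsCofGen (P : ModelStructure M) (I J : MorphismProperty M) : Prop where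
  small_I : ∀ ⦃X Y : M⦄ (f : X ⟶ Y), I f → IsSmallRel X (cell I)
  small_J : ∀ ⦃X Y : M⦄ (f : X ⟶ Y), J f → IsSmallRel X (cell J)
  fib_eq : P.fib = rlp J
  trivFib_eq : inter P.weq P.fib = rlp I

/-- A functor preserves pushouts. -/
def PreservesPushouts (G : M ⥤ N) : Prop :=
  ∀ ⦃Z X Y P : M⦄ (f : Z ⟶ X) (g : Z ⟶ Y) (inl : X ⟶ P) (inr : Y ⟶ P),
    IsPushout f g inl inr → IsPushout (G.map f) (G.map g) (G.map inl) (G.map inr)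

/-- A functor preserves transfinite compositions: it preserves colimits of
diagrams indexed by well-ordered types. -/
def PreservesTransfiniteCompositions (G : M ⥤ N) : Prop :=
  ∀ (J : Type v) [LinearOrder J] [WellFoundedLT J] (F : J ⥤ M) (c : Cocone F),
    IsColimit c → Nonempty (IsColimit (G.mapCocone c))

/-- The image `{G(f) | f ∈ K}` of a class of morphisms under a functor. -/
def strictImage (G : M ⥤ N) (K : MorphismProperty M) : MorphismProperty N :=
  fun _ _ g => ∃ (A B : M) (f : A ⟶ B), K f ∧ Arrow.mk (G.map f) = Arrow.mk g

end Transfinite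

section CofRep

variable {M : Type u} [Category.{v} M]

/-- The cofibrant replacement of `X` given by the functorial factorization of
`∅ ⟶ X`. -/
noncomputable def cofRep (P : ModelStructure M) [HasInitial M] (X : M) : M :=
  P.fact₁.Z.obj (Arrow.mk (initial.to X))

/-- The canonical trivial fibration `QX ⟶ X` from the cofibrant replacement. -/
noncomputable def cofRepHom (P : ModelStructure M) [HasInitial M] (X : M) :
    cofRep P X ⟶ X :=
  P.fact₁.π.app (Arrow.mk (initial.to X))

/-- The functor `X ↦ (∅ ⟶ X)` to the arrow category. -/
noncomputable def toArrowInit (M : Type u) [Category.{v} M] [HasInitial M] : M ⥤ Arrow M where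
  obj X := Arrow.mk (initial.to X)
  map {X Y} f := Arrow.homMk (u := 𝟙 _) (v := f) (by apply initial.hom_ext)

/-- The cofibrant replacement functor of the model structure `P`. -/
noncomputable def qFunctor (P : ModelStructure M) [HasInitial M] : M ⥤ M :=
  toArrowInit M ⋙ P.fact₁.Z

end CofRep

section FunctorCat

variable {S : Type u} [Category.{v} S]

/-- The class of morphisms in `S^C` that belong objectwise on `D` to the class `P`;
for `P` the weak equivalences (resp. fibrations) of a model structure these are
the `D`-weak equivalences (resp. the `D`-fibrations). -/
def objProp {C : Type v} [SmallCategory C] (P : MorphismProperty S) (D : Set C) :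
    MorphismProperty (C ⥤ S) :=
  fun _ _ η => ∀ d ∈ D, P (η.app d)

/-- Trivial `D`-fibrations in `S^C`. -/
def dTrivFib {C : Type v} [SmallCategory C] (P : ModelStructure S) (D : Set C) :
    MorphismProperty (C ⥤ S) :=
  inter (objProp P.weq D) (objProp P.fib D)

/-- `D`-cofibrations in `S^C`: the morphisms having the left lifting property with
respect to all trivial `D`-fibrations. -/
def dCof {C : Type v} [SmallCategory C] (P : ModelStructure S) (D : Set C) :
    MorphismProperty (C ⥤ S) :=
  llp (dTrivFib P D)

variable [HasColimits S]

/-- `D`-cofibrant objects of `S^C`. -/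
def dCofibrant {C : Type v} [SmallCategory C] (P : ModelStructure S) (D : Set C)
    (X : C ⥤ S) : Prop :=
  dCof P D (initial.to X)

/-- The model structure `U_S(C,D)` on `S^C`: a model structure whose weak
equivalences are the `D`-weak equivalences, whose fibrations are the
`D`-fibrations and whose cofibrations are the `D`-cofibrations. -/
structure RelStructure (P : ModelStructure S) (C : Type v) [SmallCategory C] (D : Set C) where
  N : ModelStructure (C ⥤ S)
  weq_eq : N.weq = objProp P.weq D
  fib_eq : N.fib = objProp P.fib D
  cof_eq : N.cof = dCof P D

/-- `X` satisfies `D`-codescent at `c`: the cofibrant replacement morphism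
`Q_{C,D} X ⟶ X` in `U_S(C,D)` is a weak equivalence at `c`. -/
def CodescentAt {C : Type v} [SmallCategory C] (P : ModelStructure S) {D : Set C}
    (U : RelStructure P C D) (X : C ⥤ S) (c : C) : Prop :=
  P.weq ((cofRepHom U.N X).app c)

/-- `X` satisfies `D`-codescent: the cofibrant replacement morphism
`Q_{C,D} X ⟶ X` is a `C`-weak equivalence. -/
def Codescent {C : Type v} [SmallCategory C] (P : ModelStructure S) {D : Set C}
    (U : RelStructure P C D) (X : C ⥤ S) : Prop :=
  ∀ c : C, CodescentAt P U X c

/-- The coproduct property for weak equivalences. -/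
def CoproductProperty (P : ModelStructure S) : Prop :=
  ∀ (ι : Type v) (X Y : ι → S) (f : ∀ i, X i ⟶ Y i),
    (∀ i, P.weq (f i)) ↔ P.weq (Limits.Sigma.map f)

end FunctorCat

section Pairs

variable {A : Type v} [SmallCategory A] {C : Type v} [SmallCategory C]

/-- Two subsets of objects are retract equivalent. -/
def RetractEquiv (D D' : Set C) : Prop :=
  (∀ d ∈ D, ∃ d' ∈ D', IsRetractObj d d') ∧ (∀ d' ∈ D', ∃ d ∈ D, IsRetractObj d' d)

/-- `Φ : (A,B) ⟶ (C,D)` is left glossy. -/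
def LeftGlossy (Φ : A ⥤ C) (B : Set A) : Prop :=
  ∀ b ∈ B, ∃ (ι : Type v) (tgt : ι → A) (β : ∀ i, Φ.obj b ⟶ Φ.obj (tgt i)),
    (∀ i, tgt i ∈ B) ∧
      ∀ (a : A) (α : Φ.obj b ⟶ Φ.obj a),
        ∃! p : (i : ι) × (tgt i ⟶ a), β p.1 ≫ Φ.map p.2 = α

/-- `Φ : (A,B) ⟶ (C,D)` is right glossy. -/
def RightGlossy (Φ : A ⥤ C) (B : Set A) : Prop :=
  ∀ b ∈ B, ∃ (ι : Type v) (src : ι → A) (β : ∀ j, Φ.obj (src j) ⟶ Φ.obj b),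
    (∀ j, src j ∈ B) ∧
      ∀ (a : A) (α : Φ.obj a ⟶ Φ.obj b),
        ∃! p : (j : ι) × (a ⟶ src j), Φ.map p.2 ≫ β p.1 = α

/-- A subset of objects is left absorbant: the source of any morphism whose
target lies in the subset also lies in the subset. -/
def LeftAbsorbant (D : Set C) : Prop :=
  ∀ ⦃c c' : C⦄, (c ⟶ c') → c' ∈ D → c ∈ D

end Pairs

end Codescent
open Codescent

/-! A trivial `D`-cofibration is a weak equivalence at every object `c`: evaluation at `c`
has a right adjoint whose components are products of copies of a morphism, so it sends
fibrations to objectwise fibrations, and by adjunction the value at `c` lifts against all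
fibrations. Ken Brown's factorization extends this to `D`-weak equivalences between
`D`-cofibrant objects. Finally, a `D`-weak equivalence `η : X' ⟶ X` with `X'` `D`-cofibrant
lifts through the cofibrant replacement `Q X ⟶ X` via such a morphism `X' ⟶ Q X`, so by
two-out-of-three `η` is a weak equivalence at `c` exactly when `Q X ⟶ X` is. -/

namespace Codescent

lemma retractHom_of_leftLiftingProperty {M : Type u} [Category.{v} M] {X Y Z : M}
    {f : X ⟶ Z} {i : X ⟶ Y} {p : Y ⟶ Z} (h : i ≫ p = f) (hf : HasLiftingProperty f p) :
    RetractHom f i :=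
  let r := RetractArrow.ofLeftLiftingProperty h
  ⟨r.i, r.r, r.retract⟩

lemma retractHom_of_rightLiftingProperty {M : Type u} [Category.{v} M] {X Y Z : M}
    {f : X ⟶ Z} {i : X ⟶ Y} {p : Y ⟶ Z} (h : i ≫ p = f) (hf : HasLiftingProperty i f) :
    RetractHom f p :=
  let r := RetractArrow.ofRightLiftingProperty h
  ⟨r.i, r.r, r.retract⟩

namespace ModelStructure

variable {M : Type u} [Category.{v} M] (P : ModelStructure M)

lemma weq_id (X : M) : P.weq (𝟙 X) :=
  have h := (P.fact₁.mem_right (Arrow.mk (𝟙 X))).1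
  P.weq_cancel_left _ (𝟙 X) h (by erw [Category.comp_id]; exact h)

lemma weq_comp_iff_of_weq_left {X Y Z : M} {f : X ⟶ Y} (g : Y ⟶ Z) (hf : P.weq f) :
    P.weq (f ≫ g) ↔ P.weq g :=
  ⟨P.weq_cancel_left f g hf, P.weq_comp f g hf⟩

lemma weq_of_mem_llp_fib {A B : M} {f : A ⟶ B} (hf : llp P.fib f) : P.weq f :=
  P.weq_retract _ _
    (retractHom_of_leftLiftingProperty (P.fact₂.fac (Arrow.mk f))
      (hf _ (P.fact₂.mem_right (Arrow.mk f))))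
    (P.fact₂.mem_left (Arrow.mk f)).1

lemma cof_of_mem_llp_trivFib {A B : M} {f : A ⟶ B} (hf : llp (inter P.weq P.fib) f) :
    P.cof f :=
  P.cof_retract _ _
    (retractHom_of_leftLiftingProperty (P.fact₁.fac (Arrow.mk f))
      (hf _ (P.fact₁.mem_right (Arrow.mk f))))
    (P.fact₁.mem_left (Arrow.mk f))

lemma fib_of_mem_rlp_trivCof {X Y : M} {g : X ⟶ Y} (hg : rlp (inter P.weq P.cof) g) :
    P.fib g :=
  P.fib_retract _ _
    (retractHom_of_rightLiftingProperty (P.fact₂.fac (Arrow.mk g))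
      (hg _ (P.fact₂.mem_left (Arrow.mk g))))
    (P.fact₂.mem_right (Arrow.mk g))

lemma cof_comp {X Y Z : M} {f : X ⟶ Y} {g : Y ⟶ Z} (hf : P.cof f) (hg : P.cof g) :
    P.cof (f ≫ g) :=
  P.cof_of_mem_llp_trivFib fun _ _ p hp =>
    have := P.cof_lift f p hf hp.1 hp.2
    have := P.cof_lift g p hg hp.1 hp.2
    inferInstance

variable [HasInitial M]

lemma cof_coprod_inl {A B : M} [HasBinaryCoproduct A B] (hB : P.cof (initial.to B)) :
    P.cof (coprod.inl : A ⟶ A ⨿ B) :=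
  P.cof_of_mem_llp_trivFib fun _ _ p hp =>
    have := P.cof_lift _ p hB hp.1 hp.2
    (IsPushout.of_hasBinaryCoproduct' A B).hasLiftingProperty p

lemma cof_coprod_inr {A B : M} [HasBinaryCoproduct A B] (hA : P.cof (initial.to A)) :
    P.cof (coprod.inr : B ⟶ A ⨿ B) :=
  P.cof_of_mem_llp_trivFib fun _ _ p hp =>
    have := P.cof_lift _ p hA hp.1 hp.2
    (IsPushout.of_hasBinaryCoproduct' A B).flip.hasLiftingProperty p

/-- Ken Brown's factorization: `p` comes from factoring `A ⨿ B ⟶ B` as a cofibration followed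
by a trivial fibration, and `j`, `s` are the two coprojections followed by that cofibration. -/
lemma exists_trivCof_comp_of_weq_of_cofibrant [HasBinaryCoproducts M] {A B : M} {θ : A ⟶ B}
    (hθ : P.weq θ) (hA : P.cof (initial.to A)) (hB : P.cof (initial.to B)) :
    ∃ (Z : M) (j : A ⟶ Z) (s : B ⟶ Z) (p : Z ⟶ B),
      P.weq j ∧ P.cof j ∧ P.weq s ∧ P.cof s ∧ j ≫ p = θ ∧ s ≫ p = 𝟙 B := by
  let φ := Arrow.mk (coprod.desc θ (𝟙 B))
  let i : A ⨿ B ⟶ P.fact₁.Z.obj φ := P.fact₁.ι.app φ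
  let p : P.fact₁.Z.obj φ ⟶ B := P.fact₁.π.app φ
  have hip : i ≫ p = coprod.desc θ (𝟙 B) := P.fact₁.fac φ
  have hp := (P.fact₁.mem_right φ).1
  have hjp : (coprod.inl ≫ i) ≫ p = θ := by rw [Category.assoc, hip, coprod.inl_desc]
  have hsp : (coprod.inr ≫ i) ≫ p = 𝟙 B := by rw [Category.assoc, hip, coprod.inr_desc]
  refine ⟨_, coprod.inl ≫ i, coprod.inr ≫ i, p, ?_,
    P.cof_comp (P.cof_coprod_inl hB) (P.fact₁.mem_left φ), ?_,
    P.cof_comp (P.cof_coprod_inr hA) (P.fact₁.mem_left φ), hjp, hsp⟩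
  · exact P.weq_cancel_right _ p hp (hjp ▸ hθ)
  · exact P.weq_cancel_right _ p hp (hsp ▸ P.weq_id B)

lemma cof_initial_to_cofRep (X : M) : P.cof (initial.to (cofRep P X)) := by
  rw [show initial.to (cofRep P X) = P.fact₁.ι.app (Arrow.mk (initial.to X)) from
    initial.hom_ext _ _]
  exact P.fact₁.mem_left _

lemma trivFib_cofRepHom (X : M) : inter P.weq P.fib (cofRepHom P X) :=
  P.fact₁.mem_right (Arrow.mk (initial.to X))

end ModelStructure

section FunctorCategory

variable {S : Type u} [Category.{v} S] {C : Type v} [SmallCategory C] [HasLimits S]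

lemma fib_app_evaluationRightAdjoint_map (P : ModelStructure S) {X Y : S} {g : X ⟶ Y}
    (hg : P.fib g) (c d : C) : P.fib (((evaluationRightAdjoint S c).map g).app d) := by
  have hpi : (Limits.Pi.map fun (_ : d ⟶ c) => g) = Pi.lift fun h => Pi.π _ h ≫ g := by
    ext; simp
  refine P.fib_of_mem_rlp_trivCof fun _ _ f hf => ?_
  have := P.fib_lift f g hf.1 hf.2 hg
  have hlift : HasLiftingProperty f (Limits.Pi.map fun (_ : d ⟶ c) => g) := inferInstance
  rw [hpi] at hlift
  exact hlift

lemma weq_app_of_mem_llp_objProp_fib (P : ModelStructure S) (D : Set C) {A B : C ⥤ S}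
    {η : A ⟶ B} (hη : llp (objProp P.fib D) η) (c : C) : P.weq (η.app c) :=
  P.weq_of_mem_llp_fib fun _ _ g hg =>
    ((evaluationAdjunctionLeft S c).hasLiftingProperty_iff η g).2
      (hη _ fun d _ => fib_app_evaluationRightAdjoint_map P hg c d)

end FunctorCategory

namespace RelStructure

variable {S : Type u} [Category.{v} S] {P : ModelStructure S}
  {C : Type v} [SmallCategory C] {D : Set C}

lemma weq_app_of_trivCof [HasLimits S] (U : RelStructure P C D) {A B : C ⥤ S} {η : A ⟶ B}
    (hw : U.N.weq η) (hc : U.N.cof η) (c : C) : P.weq (η.app c) :=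
  weq_app_of_mem_llp_objProp_fib P D (fun _ _ g hg => U.N.fib_lift η g hw hc (U.fib_eq ▸ hg)) c

variable [HasColimits S]

lemma cof_initial_to_iff (U : RelStructure P C D) (X : C ⥤ S) :
    U.N.cof (initial.to X) ↔ dCofibrant P D X := by
  rw [U.cof_eq]
  rfl

lemma dCofibrant_cofRep (U : RelStructure P C D) (X : C ⥤ S) :
    dCofibrant P D (cofRep U.N X) :=
  (U.cof_initial_to_iff _).1 (U.N.cof_initial_to_cofRep X)

lemma dTrivFib_cofRepHom (U : RelStructure P C D) (X : C ⥤ S) :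
    dTrivFib P D (cofRepHom U.N X) := by
  have h := U.N.trivFib_cofRepHom X
  rw [U.weq_eq, U.fib_eq] at h
  exact h

variable [HasLimits S]

lemma weq_app_of_dCofibrant (U : RelStructure P C D) {A B : C ⥤ S} {θ : A ⟶ B}
    (hθ : objProp P.weq D θ) (hA : dCofibrant P D A) (hB : dCofibrant P D B) (c : C) :
    P.weq (θ.app c) := by
  obtain ⟨Z, j, s, p, hj, hjc, hs, hsc, hjp, hsp⟩ :=
    U.N.exists_trivCof_comp_of_weq_of_cofibrant (U.weq_eq ▸ hθ)
      ((U.cof_initial_to_iff A).2 hA) ((U.cof_initial_to_iff B).2 hB)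
  have hp : P.weq (p.app c) :=
    P.weq_cancel_left _ _ (U.weq_app_of_trivCof hs hsc c)
      (by rw [← NatTrans.comp_app, hsp]; exact P.weq_id _)
  rw [← hjp, NatTrans.comp_app]
  exact P.weq_comp _ _ (U.weq_app_of_trivCof hj hjc c) hp

lemma codescentAt_iff_weq_app (U : RelStructure P C D) {X X' : C ⥤ S} (η : X' ⟶ X)
    (hX' : dCofibrant P D X') (hη : objProp P.weq D η) (c : C) :
    CodescentAt P U X c ↔ P.weq (η.app c) := by
  have hq := U.dTrivFib_cofRepHom X
  have := hX' _ hq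
  let sq : CommSq (initial.to _) (initial.to X') (cofRepHom U.N X) η := ⟨initial.hom_ext _ _⟩
  have hθ : objProp P.weq D sq.lift := fun d hd =>
    P.weq_cancel_right _ _ (hq.1 d hd) (by rw [← NatTrans.comp_app, sq.fac_right]; exact hη d hd)
  rw [← sq.fac_right, NatTrans.comp_app,
    P.weq_comp_iff_of_weq_left _ (U.weq_app_of_dCofibrant hθ hX' (U.dCofibrant_cofRep X) c)]
  rfl

end RelStructure

end Codescent

theorem statement_7_general {S : Type u} [Category.{v} S] [HasLimits S] [HasColimits S]
    (P : ModelStructure S)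
    {C : Type v} [SmallCategory C] (D : Set C) (U : RelStructure P C D)
    (X : C ⥤ S) (c : C) :
    (CodescentAt P U X c ↔
      ∃ (X' : C ⥤ S) (η : X' ⟶ X), dCofibrant P D X' ∧ dTrivFib P D η ∧
        P.weq (η.app c)) ∧
    (CodescentAt P U X c ↔
      ∀ (X' : C ⥤ S) (η : X' ⟶ X), dCofibrant P D X' → dTrivFib P D η →
        P.weq (η.app c)) ∧
    (CodescentAt P U X c ↔
      ∃ (X' : C ⥤ S) (η : X' ⟶ X), dCofibrant P D X' ∧
        objProp P.weq (insert c D) η) ∧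
    (CodescentAt P U X c ↔
      ∀ (X' : C ⥤ S) (η : X' ⟶ X), dCofibrant P D X' → objProp P.weq D η →
        P.weq (η.app c)) := by
  have hQ := U.dCofibrant_cofRep X
  have hq := U.dTrivFib_cofRepHom X
  have key {X' : C ⥤ S} (η : X' ⟶ X) (hX' : dCofibrant P D X') (hη : objProp P.weq D η) :
      CodescentAt P U X c ↔ P.weq (η.app c) :=
    U.codescentAt_iff_weq_app η hX' hη c
  refine ⟨⟨fun h => ⟨_, _, hQ, hq, h⟩, fun ⟨_, η, hX', hη, hc⟩ => (key η hX' hη.1).2 hc⟩,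
    ⟨fun h _ η hX' hη => (key η hX' hη.1).1 h, fun h => h _ _ hQ hq⟩,
    ⟨fun h => ⟨_, _, hQ, Set.forall_mem_insert.2 ⟨h, hq.1⟩⟩, ?_⟩,
    ⟨fun h _ η hX' hη => (key η hX' hη).1 h, fun h => h _ _ hQ hq.1⟩⟩
  rintro ⟨_, η, hX', hη⟩
  obtain ⟨hηc, hηD⟩ := Set.forall_mem_insert.1 hη
  exact (key η hX' hηD).2 hηc

/-- local flexibility of codescent (Balmer–Matthey, Prop. 5.5). -/
theorem statement_7 {S : Type u} [Category.{v} S] [HasLimits S] [HasColimits S]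
    (P : ModelStructure S) (I J : MorphismProperty S) (hcg : IsCofGen P I J)
    {C : Type v} [SmallCategory C] (D : Set C) (U : RelStructure P C D)
    (X : C ⥤ S) (c : C) :
    (CodescentAt P U X c ↔
      ∃ (X' : C ⥤ S) (η : X' ⟶ X), dCofibrant P D X' ∧ dTrivFib P D η ∧
        P.weq (η.app c)) ∧
    (CodescentAt P U X c ↔
      ∀ (X' : C ⥤ S) (η : X' ⟶ X), dCofibrant P D X' → dTrivFib P D η →
        P.weq (η.app c)) ∧
    (CodescentAt P U X c ↔
      ∃ (X' : C ⥤ S) (η : X' ⟶ X), dCofibrant P D X' ∧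
        objProp P.weq (insert c D) η) ∧
    (CodescentAt P U X c ↔
      ∀ (X' : C ⥤ S) (η : X' ⟶ X), dCofibrant P D X' → objProp P.weq D η →
        P.weq (η.app c)) :=
  statement_7_general P D U X c
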